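/- Let p₁, p₂ : Quiver.Path u v be two simple paths with the same endpoints. If Φ p₁ = Φ p₂ (as functions obj u × S → obj v × S), then Ψ p₁ = Ψ p₂ (as functions List (obj u) × S → List (obj v) × S). In other words, on simple paths the value of Φ fully determines the value of Ψ. -/

import Mathlib

noncomputable section

/-- The type of all arrows of a quiver. -/
abbrev QArr (V : Type) [Quiver.{0} V] : Type := Σ x : V, Σ y : V, x ⟶ y

section STC

variable {V : Type} [Quiver.{0} V] (obj : V → Type) (st : QArr V → Type)

/-- The global state: one state component per arrow. -/
abbrev GState : Type := ∀ e : QArr V, st e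

open Classical in
/-- Update the `e`-component of the global state, leaving the others unchanged. -/
def updState (σ : GState st) (e : QArr V) (x : st e) : GState st :=
  fun e' => if h : e' = e then cast (congrArg st h).symm x else σ e'

variable (φ : ∀ e : QArr V, obj e.1 × st e → obj e.2.1 × st e)

/-- The extension `φ* e` of the fundamental state thread `φ e` to the global state. -/
def phiExt (e : QArr V) : obj e.1 × GState st → obj e.2.1 × GState st :=
  fun z =>
    let r := φ e (z.1, z.2 e)
    (r.1, updState st z.2 e r.2)

/-- `Φ p` : composite of the extensions `φ*` along the arrows of the path `p`. -/
def Phi {u : V} : ∀ {v : V}, Quiver.Path u v → (obj u × GState st → obj v × GState st)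
  | _, .nil => id
  | _, .cons p e => fun z => phiExt obj st φ ⟨_, _, e⟩ (Phi p z)

/-- `ψ e` (curried auxiliary version): the stateful list map of `φ e`. -/
def psiAux (e : QArr V) : List (obj e.1) → st e → List (obj e.2.1) × st e
  | [], σ => ([], σ)
  | x :: xs, σ =>
    let r := φ e (x, σ)
    let r' := psiAux e xs r.2
    (r.1 :: r'.1, r'.2)

/-- `ψ e` : the stateful list map of the fundamental state thread `φ e`. -/
def psi (e : QArr V) : List (obj e.1) × st e → List (obj e.2.1) × st e :=
  fun z => psiAux obj st φ e z.1 z.2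

/-- The extension `ψ* e` of `ψ e` to the global state. -/
def psiExt (e : QArr V) : List (obj e.1) × GState st → List (obj e.2.1) × GState st :=
  fun z =>
    let r := psi obj st φ e (z.1, z.2 e)
    (r.1, updState st z.2 e r.2)

/-- `Ψ p` : composite of the extensions `ψ*` along the arrows of the path `p`. -/
def Psi {u : V} : ∀ {v : V}, Quiver.Path u v → (List (obj u) × GState st → List (obj v) × GState st)
  | _, .nil => id
  | _, .cons p e => fun z => psiExt obj st φ ⟨_, _, e⟩ (Psi p z)

/-- The list of arrows (as elements of `QArr V`) occurring in a path. -/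
def pathArrows {u : V} : ∀ {v : V}, Quiver.Path u v → List (QArr V)
  | _, .nil => []
  | _, .cons p e => ⟨_, _, e⟩ :: pathArrows p

/-- A path is simple if its arrows are pairwise distinct as elements of `QArr V`. -/
def SimplePath {u v : V} (p : Quiver.Path u v) : Prop := (pathArrows p).Nodup

/-- The stateful list map of a function `F : α × S → β × S` (auxiliary curried form). -/
def stmapAux {α β S : Type} (F : α × S → β × S) : List α → S → List β × S
  | [], σ => ([], σ)
  | x :: xs, σ =>
    let r := F (x, σ)
    let r' := stmapAux F xs r.2
    (r.1 :: r'.1, r'.2)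

/-- The stateful list map of a function `F : α × S → β × S`. -/
def stmap {α β S : Type} (F : α × S → β × S) : List α × S → List β × S :=
  fun z => stmapAux F z.1 z.2

end STC

/-!
On a simple path each arrow's extension touches a state component that the preceding part of the
path never reads or writes, so the two commute as state transformers. Stateful maps of commuting
state transformers compose, `stmap (g ∘ f) = stmap g ∘ stmap f`, and `ψ* e = stmap (φ* e)`; hence
`Ψ p = stmap (Φ p)` for every simple path `p`.
-/

/-- `f` followed by `g` can be run in either order, with the same outputs and final state. -/
def StepsCommute {α β γ δ S : Type} (f : α × S → β × S) (g : γ × S → δ × S) : Prop :=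
  ∀ a c σ, (f (a, (g (c, σ)).2)).1 = (f (a, σ)).1 ∧ (g (c, (f (a, σ)).2)).1 = (g (c, σ)).1 ∧
    (g (c, (f (a, σ)).2)).2 = (f (a, (g (c, σ)).2)).2

section Stmap

variable {α β γ δ S : Type}

theorem stmapAux_id (xs : List α) (σ : S) : stmapAux (fun z : α × S => z) xs σ = (xs, σ) := by
  induction xs generalizing σ with
  | nil => rfl
  | cons x xs ih => simp only [stmapAux, ih]

theorem stmap_id : stmap (id : α × S → α × S) = id := by
  funext z
  exact stmapAux_id z.1 z.2

theorem StepsCommute.stmapAux {f : α × S → β × S} {g : γ × S → δ × S} (h : StepsCommute f g)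
    (c : γ) (xs : List α) (σ : S) :
    stmapAux f xs (g (c, σ)).2 = ((stmapAux f xs σ).1, (g (c, (stmapAux f xs σ).2)).2) ∧
      (g (c, (stmapAux f xs σ).2)).1 = (g (c, σ)).1 := by
  induction xs generalizing σ with
  | nil => exact ⟨rfl, rfl⟩
  | cons x xs ih =>
    obtain ⟨hf, hg, hstate⟩ := h x c σ
    obtain ⟨ih_run, ih_out⟩ := ih (f (x, σ)).2
    simp only [_root_.stmapAux, ← hstate, ih_run, hf, true_and]
    exact ih_out.trans hg

theorem stmapAux_comp {f : α × S → β × S} {g : β × S → γ × S} (h : StepsCommute f g)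
    (xs : List α) (σ : S) :
    stmapAux (g ∘ f) xs σ = stmapAux g (stmapAux f xs σ).1 (stmapAux f xs σ).2 := by
  induction xs generalizing σ with
  | nil => rfl
  | cons x xs ih =>
    obtain ⟨hrun, hout⟩ := h.stmapAux (f (x, σ)).1 xs (f (x, σ)).2
    simp only [stmapAux, Function.comp_apply, ih, hrun, hout]

theorem stmap_comp {f : α × S → β × S} {g : β × S → γ × S} (h : StepsCommute f g) :
    stmap (g ∘ f) = stmap g ∘ stmap f := by
  funext z
  exact stmapAux_comp h z.1 z.2

end Stmap

section Paths

variable {V : Type} [Quiver.{0} V] {obj : V → Type} {st : QArr V → Type}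
  (φ : ∀ e : QArr V, obj e.1 × st e → obj e.2.1 × st e)

open Classical in
theorem updState_eq_update (σ : GState st) (e : QArr V) (x : st e) :
    updState st σ e x = Function.update σ e x := by
  funext e'
  by_cases h : e' = e
  · subst h
    simp [updState]
  · simp [updState, h]

open Classical in
theorem phiExt_apply (e : QArr V) (z : obj e.1 × GState st) :
    phiExt obj st φ e z =
      ((φ e (z.1, z.2 e)).1, Function.update z.2 e (φ e (z.1, z.2 e)).2) := by
  simp only [phiExt, updState_eq_update]

theorem Phi_apply_snd_of_not_mem {u v : V} (p : Quiver.Path u v) {e : QArr V}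
    (he : e ∉ pathArrows p) (x : obj u) (σ : GState st) : (Phi obj st φ p (x, σ)).2 e = σ e := by
  classical
  induction p with
  | nil => rfl
  | cons q e' ih =>
    simp only [pathArrows, List.mem_cons, not_or] at he
    simp only [Phi, phiExt_apply, Function.update_of_ne he.1, ih he.2]

open Classical in
theorem Phi_update_of_not_mem {u v : V} (p : Quiver.Path u v) {e : QArr V}
    (he : e ∉ pathArrows p) (x : obj u) (σ : GState st) (s : st e) :
    Phi obj st φ p (x, Function.update σ e s) =
      ((Phi obj st φ p (x, σ)).1, Function.update (Phi obj st φ p (x, σ)).2 e s) := by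
  induction p with
  | nil => rfl
  | cons q e' ih =>
    simp only [pathArrows, List.mem_cons, not_or] at he
    simp only [Phi, ih he.2, phiExt_apply, Function.update_of_ne (Ne.symm he.1),
      Function.update_comm he.1]

theorem stepsCommute_Phi_phiExt {u v : V} (p : Quiver.Path u v) {e : QArr V}
    (he : e ∉ pathArrows p) : StepsCommute (Phi obj st φ p) (phiExt obj st φ e) := by
  classical
  intro x c σ
  simp only [phiExt_apply, Phi_update_of_not_mem φ p he, Phi_apply_snd_of_not_mem φ p he, and_self]

theorem psiExt_eq_stmap_phiExt (e : QArr V) : psiExt obj st φ e = stmap (phiExt obj st φ e) := by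
  classical
  suffices h : ∀ xs σ, stmapAux (phiExt obj st φ e) xs σ =
      ((psiAux obj st φ e xs (σ e)).1, Function.update σ e (psiAux obj st φ e xs (σ e)).2) by
    funext z
    simp only [psiExt, psi, updState_eq_update, stmap, h]
  intro xs σ
  induction xs generalizing σ with
  | nil => simp [stmapAux, psiAux]
  | cons x xs ih =>
    simp only [stmapAux, psiAux, phiExt_apply, ih, Function.update_self, Function.update_idem]

theorem Psi_eq_stmap_Phi {u v : V} (p : Quiver.Path u v) (hp : SimplePath p) :
    Psi obj st φ p = stmap (Phi obj st φ p) := by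
  induction p with
  | nil => exact stmap_id.symm
  | cons q e ih =>
    rw [SimplePath, pathArrows, List.nodup_cons] at hp
    calc Psi obj st φ (q.cons e) = stmap (phiExt obj st φ ⟨_, _, e⟩) ∘ stmap (Phi obj st φ q) := by
          rw [← ih hp.2, ← psiExt_eq_stmap_phiExt]
          rfl
      _ = stmap (Phi obj st φ (q.cons e)) :=
          (stmap_comp (stepsCommute_Phi_phiExt φ q hp.1)).symm

end Paths

/-- on simple paths, the value of `Φ` fully determines the value of `Ψ`. -/
theorem Phi_determines_Psi {V : Type} [Quiver.{0} V] (obj : V → Type) (st : QArr V → Type)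
    (φ : ∀ e : QArr V, obj e.1 × st e → obj e.2.1 × st e)
    (u v : V) (p₁ p₂ : Quiver.Path u v) (h₁ : SimplePath p₁) (h₂ : SimplePath p₂)
    (h : Phi obj st φ p₁ = Phi obj st φ p₂) :
    Psi obj st φ p₁ = Psi obj st φ p₂ := by
  rw [Psi_eq_stmap_Phi φ p₁ h₁, Psi_eq_stmap_Phi φ p₂ h₂, h]
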